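/- arXiv:1109.4103 — 2 statements merged into one kernel-verified Lean document; each statement's English description precedes it below -/
import Mathlib

section
/- If a graph G is built from a single vertex by a sequence of k 2-edge blowouts, then choosing one of the two new edges from each blowout yields a spanning tree of G, and the complementary set of chosen edges also forms a spanning tree; hence G is the edge-disjoint union of two spanning trees. -/
/-- A multigraph: each edge `e` has two (possibly equal) endpoints
`fst e` and `snd e`.  Loops and parallel edges are allowed. -/
structure Multigraph (V : Type*) (E : Type*) where
  fst : E → V
  snd : E → V

namespace Multigraph

variable {V E : Type*}

/-- `u` and `v` are joined by some edge belonging to the edge set `S`. -/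
def Adj (G : Multigraph V E) (S : Set E) (u v : V) : Prop :=
  ∃ e ∈ S, (G.fst e = u ∧ G.snd e = v) ∨ (G.fst e = v ∧ G.snd e = u)

/-- The spanning subgraph with edge set `S` is connected
(every two vertices are joined by a walk using edges of `S`). -/
def Conn (G : Multigraph V E) (S : Set E) : Prop :=
  ∀ u v : V, Relation.ReflTransGen (G.Adj S) u v

/-- `S` is (the edge set of) a spanning tree of `G`: it is connected and spanning,
and it is minimal with this property, i.e. every edge of `S` is a bridge of the
subgraph `S` (equivalently, `S` is a connected acyclic spanning subgraph). -/
def IsSpanningTree (G : Multigraph V E) (S : Set E) : Prop :=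
  G.Conn S ∧ ∀ e ∈ S, ¬ G.Conn (S \ {e})

end Multigraph

namespace Multigraph

open Classical in
/-- The 2-edge blowout of `H` at the vertex `v`: the vertex `v` is split into two
vertices `Sum.inl v` (the vertex `v'`) and `Sum.inr ()` (the new vertex `v''`); each
endpoint of an old edge formerly at `v` is reassigned to `v''` exactly when the
corresponding partition function (`pf` for first endpoints, `ps` for second endpoints)
says so; and two new parallel edges `Sum.inr 0`, `Sum.inr 1` are added between
`v'` and `v''`. -/
noncomputable def blowout2 {V E : Type*} (H : Multigraph V E) (v : V)
    (pf ps : E → Bool) : Multigraph (V ⊕ Unit) (E ⊕ Fin 2) where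
  fst := Sum.elim
    (fun e => if H.fst e = v ∧ pf e = true then Sum.inr () else Sum.inl (H.fst e))
    (fun _ => Sum.inl v)
  snd := Sum.elim
    (fun e => if H.snd e = v ∧ ps e = true then Sum.inr () else Sum.inl (H.snd e))
    (fun _ => Sum.inr ())

end Multigraph

namespace Multigraph

/-- The one-vertex graph with no edges. -/
def point : Multigraph PUnit PEmpty where
  fst := fun e => e.elim
  snd := fun e => e.elim

/-- `Built2 G` means that `G` can be built from a single vertex by a finite
sequence of 2-edge blowouts. -/
inductive Built2 : ∀ {V E : Type}, Multigraph V E → Prop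
  | base : Built2 point
  | step {V E : Type} (H : Multigraph V E) (v : V) (pf ps : E → Bool) :
      Built2 H → Built2 (H.blowout2 v pf ps)

end Multigraph

/-! Induct along the blowouts, carrying a partition of the edges into two classes that are
both connected and have one edge fewer than there are vertices. A blowout adds one vertex
and two parallel edges `v'v''`; put one of them into each class. Each class stays connected:
`v''` hangs on `v'` by the new edge, and an old edge whose endpoint moved to `v''` is
reached from `v'` through it. Finally, a connected spanning edge set with `|V| - 1` edges is
a spanning tree, because a connected spanning subgraph has at least `|V| - 1` edges (already
its underlying simple graph, without loops and parallel edges, does). -/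

namespace Multigraph

variable {V E : Type*} (G : Multigraph V E) {S : Set E}

instance : Std.Symm (G.Adj S) where
  symm _ _ := fun ⟨e, he, h⟩ => ⟨e, he, h.symm⟩

lemma reflTransGen_fromRel_of_reflTransGen {u w : V} (h : Relation.ReflTransGen (G.Adj S) u w) :
    Relation.ReflTransGen (SimpleGraph.fromRel (G.Adj S)).Adj u w := by
  refine Relation.reflTransGen_closed (fun x y hxy => ?_) u w h
  by_cases hne : x = y
  · rw [hne]
  · exact .single ⟨hne, .inl hxy⟩

lemma edgeSet_fromRel_subset_image :
    (SimpleGraph.fromRel (G.Adj S)).edgeSet ⊆ (fun e => s(G.fst e, G.snd e)) '' S := by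
  intro z
  induction z using Sym2.ind with
  | _ x y =>
    rintro ⟨-, ⟨e, he, ⟨rfl, rfl⟩ | ⟨rfl, rfl⟩⟩ | ⟨e, he, ⟨rfl, rfl⟩ | ⟨rfl, rfl⟩⟩⟩ <;>
      exact ⟨e, he, by simp [Sym2.eq_swap]⟩

variable {G}

lemma Conn.card_le_ncard_add_one [Finite E] (h : G.Conn S) : Nat.card V ≤ S.ncard + 1 := by
  cases isEmpty_or_nonempty V
  · simp
  have hconn : (SimpleGraph.fromRel (G.Adj S)).Connected :=
    .mk fun u w => (SimpleGraph.reachable_iff_reflTransGen u w).2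
      (G.reflTransGen_fromRel_of_reflTransGen (h u w))
  calc Nat.card V ≤ Nat.card (SimpleGraph.fromRel (G.Adj S)).edgeSet + 1 :=
        hconn.card_vert_le_card_edgeSet_add_one
    _ ≤ S.ncard + 1 := by
      rw [Nat.card_coe_set_eq]
      gcongr
      exact (Set.ncard_le_ncard G.edgeSet_fromRel_subset_image).trans (Set.ncard_image_le)

variable (G S) in
def IsTightConn : Prop :=
  G.Conn S ∧ S.ncard + 1 = Nat.card V

lemma IsTightConn.isSpanningTree [Finite E] (h : G.IsTightConn S) : G.IsSpanningTree S := by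
  refine ⟨h.1, fun e he hconn => ?_⟩
  have hle := hconn.card_le_ncard_add_one
  have hdel := Set.ncard_sdiff_singleton_add_one he
  have hcard := h.2
  omega

section Blowout

variable (H : Multigraph V E) (v : V) (pf ps : E → Bool)

lemma elim_blowout2_fst_inl (e : E) :
    Sum.elim id (fun _ => v) ((H.blowout2 v pf ps).fst (.inl e)) = H.fst e := by
  simp only [blowout2, Sum.elim_inl]
  split_ifs with h
  exacts [h.1.symm, rfl]

lemma elim_blowout2_snd_inl (e : E) :
    Sum.elim id (fun _ => v) ((H.blowout2 v pf ps).snd (.inl e)) = H.snd e := by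
  simp only [blowout2, Sum.elim_inl]
  split_ifs with h
  exacts [h.1.symm, rfl]

variable {H v pf ps}

/-- `Sum.elim id (fun _ => v)` sends each vertex of the blowout to the vertex of `H` it comes
from. -/
lemma reflTransGen_inl_elim_blowout2 {S : Set (E ⊕ Fin 2)} {i : Fin 2} (hi : .inr i ∈ S)
    (w : V ⊕ Unit) :
    Relation.ReflTransGen ((H.blowout2 v pf ps).Adj S) (.inl (Sum.elim id (fun _ => v) w)) w := by
  rcases w with x | ⟨⟩
  · rfl
  · exact .single ⟨.inr i, hi, .inl ⟨rfl, rfl⟩⟩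

lemma Conn.blowout2 {T : Set E} (hT : H.Conn T) (i : Fin 2) :
    (H.blowout2 v pf ps).Conn (Sum.inl '' T ∪ {.inr i}) := by
  set G := H.blowout2 v pf ps
  set S : Set (E ⊕ Fin 2) := Sum.inl '' T ∪ {.inr i}
  have hreach : ∀ w, Relation.ReflTransGen (G.Adj S) (.inl (Sum.elim id (fun _ => v) w)) w :=
    reflTransGen_inl_elim_blowout2 (Or.inr rfl)
  have hstep : ∀ x y, H.Adj T x y → Relation.ReflTransGen (G.Adj S) (.inl x) (.inl y) := by
    rintro x y ⟨e, he, hxy⟩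
    have hadj : G.Adj S (G.fst (.inl e)) (G.snd (.inl e)) :=
      ⟨.inl e, .inl ⟨e, he, rfl⟩, .inl ⟨rfl, rfl⟩⟩
    have hfst := hreach (G.fst (.inl e))
    have hsnd := hreach (G.snd (.inl e))
    rw [elim_blowout2_fst_inl] at hfst
    rw [elim_blowout2_snd_inl] at hsnd
    have hend := (hfst.tail hadj).trans (symm hsnd)
    rcases hxy with ⟨rfl, rfl⟩ | ⟨rfl, rfl⟩
    exacts [hend, symm hend]
  intro a b
  exact ((symm (hreach a)).trans (Relation.ReflTransGen.lift' _ hstep _ _ (hT _ _))).trans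
    (hreach b)

lemma ncard_image_inl_union_singleton_inr [Finite E] (T : Set E) (i : Fin 2) :
    (Sum.inl '' T ∪ {.inr i} : Set (E ⊕ Fin 2)).ncard = T.ncard + 1 := by
  rw [Set.ncard_union_eq (by simp), Set.ncard_image_of_injective _ Sum.inl_injective,
    Set.ncard_singleton]

lemma IsTightConn.blowout2 [Finite V] [Finite E] {T : Set E} (hT : H.IsTightConn T)
    (i : Fin 2) : (H.blowout2 v pf ps).IsTightConn (Sum.inl '' T ∪ {.inr i}) :=
  ⟨hT.1.blowout2 i, by
    rw [ncard_image_inl_union_singleton_inr, Nat.card_sum, Nat.card_unique (α := Unit), hT.2]⟩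

end Blowout

lemma compl_image_inl_union_singleton_inr_zero (T : Set E) :
    (Sum.inl '' T ∪ {.inr 0} : Set (E ⊕ Fin 2))ᶜ = Sum.inl '' Tᶜ ∪ {.inr 1} := by
  ext (e | j)
  · simp
  · fin_cases j <;> simp

lemma Built2.finite {V E : Type} {G : Multigraph V E} (hG : G.Built2) : Finite V ∧ Finite E := by
  induction hG with
  | base => exact ⟨inferInstance, inferInstance⟩
  | step H v pf ps _ ih =>
    obtain ⟨_, _⟩ := ih
    exact ⟨inferInstance, inferInstance⟩

lemma Built2.exists_isTightConn_and_compl {V E : Type} {G : Multigraph V E} (hG : G.Built2) :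
    ∃ T : Set E, G.IsTightConn T ∧ G.IsTightConn Tᶜ := by
  induction hG with
  | base =>
    exact ⟨∅, ⟨fun _ _ => .refl, by simp⟩, ⟨fun _ _ => .refl, by simp⟩⟩
  | step H v pf ps hH ih =>
    obtain ⟨_, _⟩ := hH.finite
    obtain ⟨T, hT, hTc⟩ := ih
    refine ⟨Sum.inl '' T ∪ {.inr 0}, hT.blowout2 0, ?_⟩
    rw [compl_image_inl_union_singleton_inr_zero]
    exact hTc.blowout2 1

end Multigraph

/-- If a graph `G` is built from a single vertex by a sequence of 2-edge blowouts,
then `G` is the edge-disjoint union of two spanning trees. -/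
theorem built2_two_disjoint_spanning_trees {V E : Type} (G : Multigraph V E)
    (hG : Multigraph.Built2 G) :
    ∃ T1 T2 : Set E, G.IsSpanningTree T1 ∧ G.IsSpanningTree T2 ∧
      Disjoint T1 T2 ∧ T1 ∪ T2 = Set.univ := by
  have : Finite E := hG.finite.2
  obtain ⟨T, hT, hTc⟩ := hG.exists_isTightConn_and_compl
  exact ⟨T, Tᶜ, hT.isSpanningTree, hTc.isSpanningTree, disjoint_compl_right,
    Set.union_compl_self T⟩
end

section
/- Let G be a connected multigraph that is the edge-disjoint union of spanning trees T1 and T2. For any edge e1 ∈ T1: (a) if e1 is contracted, there exists an edge f in T2 whose deletion makes the resulting graph again an edge-disjoint union of two spanning trees; (b) if e1 is deleted, there exists an edge f in T2 whose contraction makes the resulting graph again an edge-disjoint union of two spanning trees. -/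
namespace Multigraph

variable {V E : Type*}

open Classical in
/-- Contract the vertex `b` onto the vertex `a` (identifying the two endpoints of a
contracted edge) and delete the edges in `S`.  Contracting an edge `x` with distinct
endpoints is `contractDelete G (G.fst x) (G.snd x) hx {x}`. -/
noncomputable def contractDelete (G : Multigraph V E) (a b : V) (hab : a ≠ b)
    (S : Set E) : Multigraph {x : V // x ≠ b} {e : E // e ∉ S} where
  fst := fun e => if h : G.fst e.1 = b then ⟨a, hab⟩ else ⟨G.fst e.1, h⟩
  snd := fun e => if h : G.snd e.1 = b then ⟨a, hab⟩ else ⟨G.snd e.1, h⟩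

end Multigraph

/-!
Contracting an edge `e` of `G` turns spanning trees containing `e` into spanning trees of
`G / e`: a set `S` of edges of `G / e` is a spanning tree as soon as `S + e` is one in `G`.
So it suffices to find `f ∈ T2` such that, in (a), `T1` and `T2 - f + e1` are spanning trees
of `G`, and in (b), `T1 - e1 + f` and `T2` are. Both are instances of the exchange property:
an edge whose ends lie in different components of `T - x` can replace `x` in the tree `T`.
In (a) take for `f` an edge of the `T2`-path between the ends of `e1`; in (b) an edge of `T2`
crossing the cut of `T1 - e1`, which exists since `T2` is connected and `T1 - e1` is not.
-/

namespace Multigraph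

variable {V E : Type*} {G : Multigraph V E} {S S' T : Set E} {u v w : V} {x y : E}

lemma Adj.symm (h : G.Adj S u v) : G.Adj S v u := by
  obtain ⟨e, he, h⟩ := h
  exact ⟨e, he, h.symm⟩

lemma Adj.mono (hS : S ⊆ S') (h : G.Adj S u v) : G.Adj S' u v := by
  obtain ⟨e, he, h⟩ := h
  exact ⟨e, hS he, h⟩

variable (G) in
def Reachable (S : Set E) : V → V → Prop := Relation.ReflTransGen (G.Adj S)

lemma Reachable.refl : G.Reachable S u u := Relation.ReflTransGen.refl

lemma Reachable.trans (h : G.Reachable S u v) (h' : G.Reachable S v w) : G.Reachable S u w :=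
  Relation.ReflTransGen.trans h h'

lemma Reachable.symm (h : G.Reachable S u v) : G.Reachable S v u :=
  Relation.ReflTransGen.mono (fun _ _ h => Adj.symm h) _ _ (Relation.reflTransGen_swap.mpr h)

lemma Reachable.mono (hS : S ⊆ S') (h : G.Reachable S u v) : G.Reachable S' u v :=
  Relation.ReflTransGen.mono (fun _ _ => Adj.mono hS) _ _ h

lemma reachable_of_mem (hx : x ∈ S) : G.Reachable S (G.fst x) (G.snd x) :=
  Relation.ReflTransGen.single ⟨x, hx, Or.inl ⟨rfl, rfl⟩⟩

lemma Reachable.map {V' E' : Type*} {G' : Multigraph V' E'} {S' : Set E'} (φ : V → V')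
    (hφ : ∀ e ∈ S, G'.Reachable S' (φ (G.fst e)) (φ (G.snd e))) (h : G.Reachable S u v) :
    G'.Reachable S' (φ u) (φ v) := by
  refine Relation.ReflTransGen.lift' φ ?_ _ _ h
  rintro a b ⟨e, he, ⟨rfl, rfl⟩ | ⟨rfl, rfl⟩⟩
  · exact hφ e he
  · exact (hφ e he).symm

lemma Conn.reachable (hS : G.Conn S) (u v : V) : G.Reachable S u v := hS u v

lemma Conn.of_reachable (hS : G.Conn S) (h : ∀ e ∈ S, G.Reachable S' (G.fst e) (G.snd e)) :
    G.Conn S' :=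
  fun u v => Reachable.map id h (hS u v)

lemma Conn.mono (hS' : S ⊆ S') (hS : G.Conn S) : G.Conn S' :=
  hS.of_reachable fun _ he => reachable_of_mem (hS' he)

lemma reachable_insert_iff :
    G.Reachable (insert x S) u v ↔ G.Reachable S u v ∨
      (G.Reachable S u (G.fst x) ∧ G.Reachable S (G.snd x) v) ∨
      (G.Reachable S u (G.snd x) ∧ G.Reachable S (G.fst x) v) := by
  have hsub : S ⊆ insert x S := Set.subset_insert x S
  have hx : G.Reachable (insert x S) (G.fst x) (G.snd x) := reachable_of_mem (Set.mem_insert x S)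
  refine ⟨fun h => ?_, ?_⟩
  · induction h with
    | refl => exact Or.inl .refl
    | tail _ hstep ih =>
      obtain ⟨e, he, hends⟩ := hstep
      rcases he with rfl | he
      · rcases hends with ⟨rfl, rfl⟩ | ⟨rfl, rfl⟩ <;>
          rcases ih with h | ⟨h, -⟩ | ⟨h, -⟩ <;>
          simp only [h, Reachable.refl, and_self, or_true, true_or]
      · have hstep : G.Reachable S _ _ := Relation.ReflTransGen.single ⟨e, he, hends⟩
        rcases ih with h | ⟨h, h'⟩ | ⟨h, h'⟩
        · exact Or.inl (h.trans hstep)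
        · exact Or.inr (Or.inl ⟨h, h'.trans hstep⟩)
        · exact Or.inr (Or.inr ⟨h, h'.trans hstep⟩)
  · rintro (h | ⟨h, h'⟩ | ⟨h, h'⟩)
    · exact h.mono hsub
    · exact ((h.mono hsub).trans hx).trans (h'.mono hsub)
    · exact ((h.mono hsub).trans hx.symm).trans (h'.mono hsub)

lemma Reachable.exists_finset (h : G.Reachable S u v) :
    ∃ P : Finset E, ↑P ⊆ S ∧ G.Reachable ↑P u v := by
  classical
  induction h with
  | refl => exact ⟨∅, by simp, .refl⟩
  | tail _ hstep ih =>
    obtain ⟨P, hPS, hP⟩ := ih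
    obtain ⟨e, he, hends⟩ := hstep
    refine ⟨insert e P, by simpa using Set.insert_subset he hPS, ?_⟩
    rw [Finset.coe_insert]
    exact (hP.mono (Set.subset_insert e _)).trans
      (Relation.ReflTransGen.single ⟨e, Set.mem_insert e _, hends⟩)

namespace IsSpanningTree

lemma not_reachable_sdiff (hT : G.IsSpanningTree T) (hx : x ∈ T) :
    ¬ G.Reachable (T \ {x}) (G.fst x) (G.snd x) := by
  intro h
  refine hT.2 x hx (hT.1.of_reachable fun e he => ?_)
  by_cases hex : e = x
  · exact hex ▸ h
  · exact reachable_of_mem ⟨he, hex⟩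

lemma reachable_sdiff_fst_or_snd (hT : G.IsSpanningTree T) (hx : x ∈ T) (w : V) :
    G.Reachable (T \ {x}) w (G.fst x) ∨ G.Reachable (T \ {x}) w (G.snd x) := by
  have h := hT.1.reachable w (G.fst x)
  rw [← Set.insert_sdiff_self_of_mem hx, reachable_insert_iff] at h
  rcases h with h | ⟨h, -⟩ | ⟨h, -⟩
  · exact Or.inl h
  · exact Or.inl h
  · exact Or.inr h

lemma insert_sdiff (hT : G.IsSpanningTree T) (hx : x ∈ T)
    (hy : ¬ G.Reachable (T \ {x}) (G.fst y) (G.snd y)) :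
    G.IsSpanningTree (insert y (T \ {x})) := by
  have hsub : T \ {x} ⊆ insert y (T \ {x}) := Set.subset_insert y _
  have hxy : G.Reachable (insert y (T \ {x})) (G.fst x) (G.snd x) := by
    have hy' : G.Reachable (insert y (T \ {x})) (G.fst y) (G.snd y) :=
      reachable_of_mem (Set.mem_insert y _)
    rcases hT.reachable_sdiff_fst_or_snd hx (G.fst y) with h | h <;>
      rcases hT.reachable_sdiff_fst_or_snd hx (G.snd y) with h' | h'
    · exact absurd (h.trans h'.symm) hy
    · exact ((h.symm.mono hsub).trans hy').trans (h'.mono hsub)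
    · exact ((h'.symm.mono hsub).trans hy'.symm).trans (h.mono hsub)
    · exact absurd (h.trans h'.symm) hy
  refine ⟨hT.1.of_reachable fun e he => ?_, fun g hg hconn => ?_⟩
  · by_cases hex : e = x
    · exact hex ▸ hxy
    · exact reachable_of_mem (hsub ⟨he, hex⟩)
  rcases hg with rfl | hg
  · exact hT.2 x hx (hconn.mono (Set.sdiff_singleton_subset_iff.mpr subset_rfl))
  have hgy : g ≠ y := by rintro rfl; exact hy (reachable_of_mem hg)
  have hgT : G.Reachable (T \ {x}) (G.fst g) (G.snd g) := reachable_of_mem hg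
  have hsub' : (T \ {x}) \ {g} ⊆ T \ {g} := Set.sdiff_subset_sdiff_left Set.sdiff_subset
  have h := hconn.reachable (G.fst g) (G.snd g)
  rw [← Set.insert_sdiff_singleton_comm hgy.symm, reachable_insert_iff] at h
  rcases h with h | ⟨h, h'⟩ | ⟨h, h'⟩
  · exact hT.not_reachable_sdiff hg.1 (h.mono hsub')
  · exact hy (((h.symm.mono Set.sdiff_subset).trans hgT).trans (h'.symm.mono Set.sdiff_subset))
  · exact hy (((h'.mono Set.sdiff_subset).trans hgT.symm).trans (h.mono Set.sdiff_subset))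

lemma exists_not_reachable_sdiff (hT : G.IsSpanningTree T) (huv : u ≠ v) :
    ∃ f ∈ T, ¬ G.Reachable (T \ {f}) u v := by
  classical
  suffices ∀ P : Finset E, ↑P ⊆ T → G.Reachable ↑P u v →
      ∃ f ∈ T, ¬ G.Reachable (T \ {f}) u v by
    obtain ⟨P, hPT, hP⟩ := (hT.1.reachable u v).exists_finset
    exact this P hPT hP
  intro P
  induction P using Finset.induction_on with
  | empty =>
    intro _ hP
    refine absurd ((Relation.reflTransGen_iff_eq fun _ ⟨_, he, _⟩ => ?_).mp hP).symm huv
    simp at he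
  | insert f P hfP ih =>
    intro hPT hP
    rw [Finset.coe_insert, Set.insert_subset_iff] at hPT
    rw [Finset.coe_insert, reachable_insert_iff] at hP
    have hPf : ↑P ⊆ T \ {f} := fun e he => ⟨hPT.2 he, by rintro rfl; exact hfP he⟩
    refine hP.elim (ih hPT.2) fun hends =>
      ⟨f, hPT.1, fun huv => hT.not_reachable_sdiff hPT.1 ?_⟩
    rcases hends with ⟨h, h'⟩ | ⟨h, h'⟩
    · exact ((h.symm.mono hPf).trans huv).trans (h'.symm.mono hPf)
    · exact ((h'.mono hPf).trans huv.symm).trans (h.mono hPf)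

end IsSpanningTree

lemma exists_mem_not_reachable_of_conn (hS : G.Conn S) (hT : ¬ G.Conn T) :
    ∃ f ∈ S, ¬ G.Reachable T (G.fst f) (G.snd f) := by
  by_contra! h
  exact hT (hS.of_reachable h)

open Classical in
noncomputable def mergeVertex {a b : V} (hab : a ≠ b) (v : V) : {x : V // x ≠ b} :=
  if h : v = b then ⟨a, hab⟩ else ⟨v, h⟩

section contraction

variable {a b : V} (hab : a ≠ b)

lemma mergeVertex_val (v : {x : V // x ≠ b}) : mergeVertex hab v.1 = v := by
  simp [mergeVertex, v.2]

lemma mergeVertex_right : mergeVertex hab b = mergeVertex hab a := by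
  simp [mergeVertex, hab]

lemma reachable_mergeVertex (hS : G.Reachable S a b) (v : V) :
    G.Reachable S (mergeVertex hab v).1 v := by
  by_cases hv : v = b
  · simpa [mergeVertex, hv] using hS
  · simpa [mergeVertex, hv] using Reachable.refl

lemma contractDelete_fst {D : Set E} (e : {e : E // e ∉ D}) :
    (G.contractDelete a b hab D).fst e = mergeVertex hab (G.fst e.1) := rfl

lemma contractDelete_snd {D : Set E} (e : {e : E // e ∉ D}) :
    (G.contractDelete a b hab D).snd e = mergeVertex hab (G.snd e.1) := rfl

end contraction

variable {D : Set E} {e : E}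

lemma conn_contractDelete_iff (he : e ∈ D) (hne : G.fst e ≠ G.snd e)
    (S : Set {x : E // x ∉ D}) :
    (G.contractDelete (G.fst e) (G.snd e) hne D).Conn S ↔
      G.Conn (insert e (Subtype.val '' S)) := by
  have hab : G.Reachable (insert e (Subtype.val '' S)) (G.fst e) (G.snd e) :=
    reachable_of_mem (Set.mem_insert e _)
  refine ⟨fun h u v => ?_, fun h u v => ?_⟩
  · refine ((reachable_mergeVertex hne hab u).symm.trans ?_).trans
      (reachable_mergeVertex hne hab v)
    refine Reachable.map Subtype.val (fun g hg => ?_) (h.reachable _ _)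
    rw [contractDelete_fst, contractDelete_snd]
    exact ((reachable_mergeVertex hne hab _).trans
      (reachable_of_mem (Set.mem_insert_of_mem e ⟨g, hg, rfl⟩))).trans
      (reachable_mergeVertex hne hab _).symm
  · rw [← mergeVertex_val hne u, ← mergeVertex_val hne v]
    refine Reachable.map (mergeVertex hne) (fun g hg => ?_) (h.reachable _ _)
    rcases hg with rfl | ⟨g, hg, rfl⟩
    · rw [mergeVertex_right]
      exact Reachable.refl
    · exact reachable_of_mem hg

lemma IsSpanningTree.contractDelete {S : Set {x : E // x ∉ D}}
    (hT : G.IsSpanningTree (insert e (Subtype.val '' S))) (he : e ∈ D)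
    (hne : G.fst e ≠ G.snd e) :
    (G.contractDelete (G.fst e) (G.snd e) hne D).IsSpanningTree S := by
  refine ⟨(conn_contractDelete_iff he hne S).mpr hT.1, fun g hg hconn => ?_⟩
  have hge : g.1 ≠ e := by rintro rfl; exact g.2 he
  rw [conn_contractDelete_iff he hne, Set.image_sdiff Subtype.val_injective, Set.image_singleton,
    Set.insert_sdiff_singleton_comm hge.symm] at hconn
  exact hT.2 g.1 (Set.mem_insert_of_mem e ⟨g, hg, rfl⟩) hconn

lemma exists_two_trees_contractDelete {T₁ T₂ : Set E} (hdisj : Disjoint T₁ T₂)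
    (hunion : T₁ ∪ T₂ = Set.univ) (he : e ∈ D) (hne : G.fst e ≠ G.snd e)
    (h₁ : G.IsSpanningTree (insert e (T₁ \ D)))
    (h₂ : G.IsSpanningTree (insert e (T₂ \ D))) :
    ∃ S₁ S₂ : Set {x : E // x ∉ D},
      (G.contractDelete (G.fst e) (G.snd e) hne D).IsSpanningTree S₁ ∧
      (G.contractDelete (G.fst e) (G.snd e) hne D).IsSpanningTree S₂ ∧
      Disjoint S₁ S₂ ∧ S₁ ∪ S₂ = Set.univ := by
  have himage (T : Set E) :
      Subtype.val '' (Subtype.val ⁻¹' T : Set {x : E // x ∉ D}) = T \ D := by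
    ext; simp [and_comm]
  refine ⟨Subtype.val ⁻¹' T₁, Subtype.val ⁻¹' T₂, ?_, ?_, hdisj.preimage _, ?_⟩
  · exact IsSpanningTree.contractDelete (by rwa [himage]) he hne
  · exact IsSpanningTree.contractDelete (by rwa [himage]) he hne
  · rw [← Set.preimage_union, hunion, Set.preimage_univ]

end Multigraph

theorem contract_or_delete_keeps_two_trees_general {V E : Type*}
    (G : Multigraph V E)
    (T1 T2 : Set E)
    (h1 : G.IsSpanningTree T1) (h2 : G.IsSpanningTree T2)
    (hdisj : Disjoint T1 T2) (hunion : T1 ∪ T2 = Set.univ)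
    (e1 : E) (he1 : e1 ∈ T1) :
    (∃ (hne : G.fst e1 ≠ G.snd e1) (f : E), f ∈ T2 ∧
      ∃ S1 S2 : Set {e : E // e ∉ ({e1, f} : Set E)},
        (G.contractDelete (G.fst e1) (G.snd e1) hne {e1, f}).IsSpanningTree S1 ∧
        (G.contractDelete (G.fst e1) (G.snd e1) hne {e1, f}).IsSpanningTree S2 ∧
        Disjoint S1 S2 ∧ S1 ∪ S2 = Set.univ) ∧
    (∃ f : E, f ∈ T2 ∧ ∃ hne : G.fst f ≠ G.snd f,
      ∃ S1 S2 : Set {e : E // e ∉ ({e1, f} : Set E)},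
        (G.contractDelete (G.fst f) (G.snd f) hne {e1, f}).IsSpanningTree S1 ∧
        (G.contractDelete (G.fst f) (G.snd f) hne {e1, f}).IsSpanningTree S2 ∧
        Disjoint S1 S2 ∧ S1 ∪ S2 = Set.univ) := by
  have he1T2 : e1 ∉ T2 := Set.disjoint_left.mp hdisj he1
  constructor
  · have hne : G.fst e1 ≠ G.snd e1 := fun h =>
      h1.not_reachable_sdiff he1 (h ▸ Multigraph.Reachable.refl)
    obtain ⟨f, hf, hsep⟩ := h2.exists_not_reachable_sdiff hne
    have hfT1 : f ∉ T1 := Set.disjoint_right.mp hdisj hf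
    refine ⟨hne, f, hf,
      Multigraph.exists_two_trees_contractDelete hdisj hunion (by simp) hne ?_ ?_⟩
    · rwa [Set.insert_sdiff_insert, Set.sdiff_singleton_eq_self hfT1, Set.insert_eq_of_mem he1]
    · rw [Set.insert_sdiff_insert]
      exact h2.insert_sdiff hf hsep
  · obtain ⟨f, hf, hcross⟩ := Multigraph.exists_mem_not_reachable_of_conn h2.1 (h1.2 e1 he1)
    have hne : G.fst f ≠ G.snd f := fun h => hcross (h ▸ Multigraph.Reachable.refl)
    refine ⟨f, hf, hne,
      Multigraph.exists_two_trees_contractDelete hdisj hunion (by simp) hne ?_ ?_⟩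
    · rw [Set.pair_comm, Set.insert_sdiff_insert]
      exact h1.insert_sdiff he1 hcross
    · rwa [Set.pair_comm, Set.insert_sdiff_insert, Set.sdiff_singleton_eq_self he1T2,
        Set.insert_eq_of_mem hf]

/-- Let `G` be a connected multigraph that is the edge-disjoint union of spanning trees
`T1` and `T2`, and let `e1 ∈ T1`.  (a) Contracting `e1`, there is an edge `f ∈ T2`
whose deletion makes the resulting graph `(G/e1) - f` again an edge-disjoint union of
two spanning trees.  (b) Deleting `e1`, there is an edge `f ∈ T2` whose contraction
makes the resulting graph `(G - e1)/f` again an edge-disjoint union of two spanning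
trees. -/
theorem contract_or_delete_keeps_two_trees {V E : Type*} [Fintype V] [Fintype E]
    (G : Multigraph V E) (hconn : G.Conn Set.univ)
    (T1 T2 : Set E)
    (h1 : G.IsSpanningTree T1) (h2 : G.IsSpanningTree T2)
    (hdisj : Disjoint T1 T2) (hunion : T1 ∪ T2 = Set.univ)
    (e1 : E) (he1 : e1 ∈ T1) :
    (∃ (hne : G.fst e1 ≠ G.snd e1) (f : E), f ∈ T2 ∧
      ∃ S1 S2 : Set {e : E // e ∉ ({e1, f} : Set E)},
        (G.contractDelete (G.fst e1) (G.snd e1) hne {e1, f}).IsSpanningTree S1 ∧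
        (G.contractDelete (G.fst e1) (G.snd e1) hne {e1, f}).IsSpanningTree S2 ∧
        Disjoint S1 S2 ∧ S1 ∪ S2 = Set.univ) ∧
    (∃ f : E, f ∈ T2 ∧ ∃ hne : G.fst f ≠ G.snd f,
      ∃ S1 S2 : Set {e : E // e ∉ ({e1, f} : Set E)},
        (G.contractDelete (G.fst f) (G.snd f) hne {e1, f}).IsSpanningTree S1 ∧
        (G.contractDelete (G.fst f) (G.snd f) hne {e1, f}).IsSpanningTree S2 ∧
        Disjoint S1 S2 ∧ S1 ∪ S2 = Set.univ) :=
  contract_or_delete_keeps_two_trees_general G T1 T2 h1 h2 hdisj hunion e1 he1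
end
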